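/- Let Σ_m be a decreasing sequence of subshifts of finite type contained in an irreducible SFT Σ_0, with intersection ∩_m Σ_m = Σ_A ⊔ Σ_D. Let φ be Lipschitz on Σ_0 and suppose the pressures of (Σ_A, φ) and (Σ_D, φ) are both equal to P. Then the pressures P_m = P(Σ_m, φ) form a decreasing sequence converging to P. -/

import Mathlib

set_option linter.unusedSectionVars false

open Filter Topology
open scoped Classical

namespace Stmt11

/-- The shift map on one-sided sequence space. -/
def shiftMap {A : Type*} (ω : ℕ → A) : ℕ → A := fun n => ω (n + 1)

/-- First index where two sequences differ. -/
noncomputable def firstDiff {A : Type*} (ω ω' : ℕ → A) : ℕ :=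
  sInf {k | ω k ≠ ω' k}

/-- The standard metric `d(ω,ω') = 2^{-n(ω,ω')}` on sequence space. -/
noncomputable def sdist {A : Type*} (ω ω' : ℕ → A) : ℝ :=
  if ω = ω' then 0 else (2 : ℝ) ^ (-(firstDiff ω ω' : ℤ))

/-- Topological pressure of a potential `φ` on a subshift `X`, defined via
admissible words and suprema of Birkhoff sums over cylinders. -/
noncomputable def pressure {A : Type*} [Fintype A] (X : Set (ℕ → A))
    (φ : (ℕ → A) → ℝ) : ℝ :=
  limsup (fun n : ℕ =>
    (1 / (n : ℝ)) * Real.log (∑ w : Fin n → A,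
      if (∃ x ∈ X, ∀ i : Fin n, x (i : ℕ) = w i) then
        Real.exp (sSup ((fun x => ∑ k ∈ Finset.range n, φ (shiftMap^[k] x)) ''
          {x ∈ X | ∀ i : Fin n, x (i : ℕ) = w i}))
      else 0)) atTop

section Aux

variable {A : Type*} [Fintype A]

/-- Birkhoff sum. -/
noncomputable def birk (φ : (ℕ → A) → ℝ) (n : ℕ) : (ℕ → A) → ℝ :=
  fun x => ∑ k ∈ Finset.range n, φ (shiftMap^[k] x)

/-- Cylinder inside `X`. -/
def cylSet (X : Set (ℕ → A)) (n : ℕ) (w : Fin n → A) : Set (ℕ → A) :=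
  {x ∈ X | ∀ i : Fin n, x (i : ℕ) = w i}

/-- A word is admissible in `X`. -/
def adm (X : Set (ℕ → A)) (n : ℕ) (w : Fin n → A) : Prop :=
  ∃ x ∈ X, ∀ i : Fin n, x (i : ℕ) = w i

/-- Partition-function summand. -/
noncomputable def zterm (X : Set (ℕ → A)) (φ : (ℕ → A) → ℝ) (n : ℕ) (w : Fin n → A) : ℝ :=
  if adm X n w then Real.exp (sSup (birk φ n '' cylSet X n w)) else 0

/-- Partition function. -/
noncomputable def zsum (X : Set (ℕ → A)) (φ : (ℕ → A) → ℝ) (n : ℕ) : ℝ :=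
  ∑ w : Fin n → A, zterm X φ n w

lemma pressure_eq (X : Set (ℕ → A)) (φ : (ℕ → A) → ℝ) :
    pressure X φ = limsup (fun n : ℕ => Real.log (zsum X φ n) / n) atTop := by
  unfold pressure zsum zterm birk cylSet adm
  simp only [one_div_mul_eq_div]

lemma shift_iterate_apply (x : ℕ → A) (k i : ℕ) : (shiftMap^[k] x) i = x (i + k) := by
  induction k generalizing x i with
  | zero => rfl
  | succ k ih =>
    rw [Function.iterate_succ_apply, ih]
    simp [shiftMap, Nat.add_assoc, Nat.add_comm 1 k]

lemma mem_cyl_self (X : Set (ℕ → A)) (n : ℕ) {x : ℕ → A} (hx : x ∈ X) :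
    x ∈ cylSet X n (fun i => x (i : ℕ)) := ⟨hx, fun _ => rfl⟩

lemma adm_self (X : Set (ℕ → A)) (n : ℕ) {x : ℕ → A} (hx : x ∈ X) :
    adm X n (fun i => x (i : ℕ)) := ⟨x, hx, fun _ => rfl⟩

variable {φ : (ℕ → A) → ℝ} {M : ℝ}

lemma zterm_nonneg (X : Set (ℕ → A)) (n : ℕ) (w : Fin n → A) : 0 ≤ zterm X φ n w := by
  unfold zterm; split
  · exact (Real.exp_pos _).le
  · rfl

lemma zsum_nonneg (X : Set (ℕ → A)) (n : ℕ) : 0 ≤ zsum X φ n :=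
  Finset.sum_nonneg fun w _ => zterm_nonneg X n w

variable (hM : ∀ ω, |φ ω| ≤ M)

section withM
include hM

lemma birk_abs (n : ℕ) (x : ℕ → A) : |birk φ n x| ≤ n * M := by
  calc |birk φ n x| ≤ ∑ k ∈ Finset.range n, |φ (shiftMap^[k] x)| :=
        Finset.abs_sum_le_sum_abs _ _
    _ ≤ ∑ _k ∈ Finset.range n, M := Finset.sum_le_sum fun k _ => hM _
    _ = n * M := by simp [mul_comm]

lemma bddAbove_birk_image (X : Set (ℕ → A)) (n : ℕ) (w : Fin n → A) :
    BddAbove (birk φ n '' cylSet X n w) := by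
  refine ⟨n * M, ?_⟩
  rintro _ ⟨x, -, rfl⟩
  exact (abs_le.1 (birk_abs hM n x)).2

lemma exp_le_zterm_of_adm {X : Set (ℕ → A)} {n : ℕ} {w : Fin n → A} (h : adm X n w) :
    Real.exp (-(n * M)) ≤ zterm X φ n w := by
  obtain ⟨x, hx, hxw⟩ := h
  have hxc : x ∈ cylSet X n w := ⟨hx, hxw⟩
  have h1 : -(n * M) ≤ birk φ n x := (abs_le.1 (birk_abs hM n x)).1
  have h2 : birk φ n x ≤ sSup (birk φ n '' cylSet X n w) :=
    le_csSup (bddAbove_birk_image hM X n w) ⟨x, hxc, rfl⟩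
  rw [zterm, if_pos ⟨x, hx, hxw⟩]
  exact Real.exp_le_exp.2 (h1.trans h2)

lemma exp_le_zsum {X : Set (ℕ → A)} (hX : X.Nonempty) (n : ℕ) :
    Real.exp (-(n * M)) ≤ zsum X φ n := by
  obtain ⟨x, hx⟩ := hX
  calc Real.exp (-(n * M)) ≤ zterm X φ n (fun i => x (i : ℕ)) :=
        exp_le_zterm_of_adm hM (adm_self X n hx)
    _ ≤ zsum X φ n := Finset.single_le_sum (fun w _ => zterm_nonneg X n w) (Finset.mem_univ _)

lemma zsum_pos {X : Set (ℕ → A)} (hX : X.Nonempty) (n : ℕ) : 0 < zsum X φ n :=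
  lt_of_lt_of_le (Real.exp_pos _) (exp_le_zsum hM hX n)

lemma zterm_mono {X Y : Set (ℕ → A)} (hXY : X ⊆ Y) (n : ℕ) (w : Fin n → A) :
    zterm X φ n w ≤ zterm Y φ n w := by
  unfold zterm
  by_cases hX : adm X n w
  · have hY : adm Y n w := by obtain ⟨x, hx, hxw⟩ := hX; exact ⟨x, hXY hx, hxw⟩
    rw [if_pos hX, if_pos hY]
    apply Real.exp_le_exp.2
    apply csSup_le_csSup (bddAbove_birk_image hM Y n w)
    · obtain ⟨x, hx, hxw⟩ := hX; exact ⟨birk φ n x, x, ⟨hx, hxw⟩, rfl⟩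
    · exact Set.image_mono fun x hx => ⟨hXY hx.1, hx.2⟩
  · rw [if_neg hX]; split
    · exact (Real.exp_pos _).le
    · rfl

lemma zsum_mono {X Y : Set (ℕ → A)} (hXY : X ⊆ Y) (n : ℕ) :
    zsum X φ n ≤ zsum Y φ n :=
  Finset.sum_le_sum fun w _ => zterm_mono hM hXY n w

lemma zterm_union_le (X Y : Set (ℕ → A)) (n : ℕ) (w : Fin n → A) :
    zterm (X ∪ Y) φ n w ≤ zterm X φ n w + zterm Y φ n w := by
  have hcyl : cylSet (X ∪ Y) n w = cylSet X n w ∪ cylSet Y n w := by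
    ext x; constructor
    · rintro ⟨hx | hx, hw⟩
      · exact Or.inl ⟨hx, hw⟩
      · exact Or.inr ⟨hx, hw⟩
    · rintro (⟨hx, hw⟩ | ⟨hx, hw⟩)
      · exact ⟨Or.inl hx, hw⟩
      · exact ⟨Or.inr hx, hw⟩
  by_cases hU : adm (X ∪ Y) n w
  · rw [zterm, if_pos hU, hcyl, Set.image_union]
    by_cases hX : adm X n w <;> by_cases hY : adm Y n w
    · have hneX : (birk φ n '' cylSet X n w).Nonempty := by
        obtain ⟨x, hx, hw⟩ := hX; exact ⟨_, x, ⟨hx, hw⟩, rfl⟩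
      have hneY : (birk φ n '' cylSet Y n w).Nonempty := by
        obtain ⟨x, hx, hw⟩ := hY; exact ⟨_, x, ⟨hx, hw⟩, rfl⟩
      rw [csSup_union (bddAbove_birk_image hM X n w) hneX (bddAbove_birk_image hM Y n w) hneY]
      rw [zterm, if_pos hX, zterm, if_pos hY]
      rcases le_total (sSup (birk φ n '' cylSet X n w)) (sSup (birk φ n '' cylSet Y n w)) with h | h
      · rw [sup_eq_right.2 h]
        nlinarith [Real.exp_pos (sSup (birk φ n '' cylSet X n w))]
      · rw [sup_eq_left.2 h]
        nlinarith [Real.exp_pos (sSup (birk φ n '' cylSet Y n w))]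
    · have : cylSet Y n w = ∅ := by
        rw [Set.eq_empty_iff_forall_notMem]; rintro x ⟨hx, hw⟩; exact hY ⟨x, hx, hw⟩
      rw [this, Set.image_empty, Set.union_empty, zterm, if_pos hX, zterm, if_neg hY, add_zero]
    · have : cylSet X n w = ∅ := by
        rw [Set.eq_empty_iff_forall_notMem]; rintro x ⟨hx, hw⟩; exact hX ⟨x, hx, hw⟩
      rw [this, Set.image_empty, Set.empty_union, zterm, if_neg hX, zterm, if_pos hY, zero_add]
    · exfalso; obtain ⟨x, hx | hx, hw⟩ := hU
      · exact hX ⟨x, hx, hw⟩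
      · exact hY ⟨x, hx, hw⟩
  · rw [zterm, if_neg hU]
    exact add_nonneg (zterm_nonneg X n w) (zterm_nonneg Y n w)

lemma zsum_union_le (X Y : Set (ℕ → A)) (n : ℕ) :
    zsum (X ∪ Y) φ n ≤ zsum X φ n + zsum Y φ n := by
  rw [zsum, zsum, zsum, ← Finset.sum_add_distrib]
  exact Finset.sum_le_sum fun w _ => zterm_union_le hM X Y n w

omit hM in
lemma birk_add (m n : ℕ) (x : ℕ → A) :
    birk φ (m + n) x = birk φ m x + birk φ n (shiftMap^[m] x) := by
  unfold birk
  rw [Finset.sum_range_add]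
  congr 1
  refine Finset.sum_congr rfl fun k _ => ?_
  rw [← Function.iterate_add_apply, Nat.add_comm k m]

omit hM in
lemma iter_mem {X : Set (ℕ → A)} (hinv : shiftMap '' X ⊆ X) {x : ℕ → A} (hx : x ∈ X) (k : ℕ) :
    shiftMap^[k] x ∈ X := by
  induction k with
  | zero => exact hx
  | succ k ih => rw [Function.iterate_succ_apply']; exact hinv ⟨_, ih, rfl⟩

lemma zterm_submul {X : Set (ℕ → A)} (hinv : shiftMap '' X ⊆ X) (m n : ℕ)
    (w : Fin (m + n) → A) :
    zterm X φ (m + n) w ≤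
      zterm X φ m (fun i => w (Fin.castAdd n i)) * zterm X φ n (fun i => w (Fin.natAdd m i)) := by
  by_cases hU : adm X (m + n) w
  · obtain ⟨x₀, hx₀, hw₀⟩ := hU
    have hadm1 : adm X m (fun i => w (Fin.castAdd n i)) :=
      ⟨x₀, hx₀, fun i => hw₀ (Fin.castAdd n i)⟩
    have hadm2 : adm X n (fun i => w (Fin.natAdd m i)) := by
      refine ⟨shiftMap^[m] x₀, iter_mem hinv hx₀ m, fun i => ?_⟩
      rw [shift_iterate_apply]
      have := hw₀ (Fin.natAdd m i)
      simpa [Nat.add_comm] using this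
    rw [zterm, if_pos ⟨x₀, hx₀, hw₀⟩, zterm, if_pos hadm1, zterm, if_pos hadm2,
      ← Real.exp_add]
    apply Real.exp_le_exp.2
    apply csSup_le
    · exact ⟨_, x₀, ⟨hx₀, hw₀⟩, rfl⟩
    rintro _ ⟨x, ⟨hx, hw⟩, rfl⟩
    rw [birk_add]
    have h1 : birk φ m x ≤ sSup (birk φ m '' cylSet X m (fun i => w (Fin.castAdd n i))) := by
      apply le_csSup (bddAbove_birk_image hM X m _)
      exact ⟨x, ⟨hx, fun i => hw (Fin.castAdd n i)⟩, rfl⟩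
    have h2 : birk φ n (shiftMap^[m] x) ≤
        sSup (birk φ n '' cylSet X n (fun i => w (Fin.natAdd m i))) := by
      apply le_csSup (bddAbove_birk_image hM X n _)
      refine ⟨shiftMap^[m] x, ⟨iter_mem hinv hx m, fun i => ?_⟩, rfl⟩
      rw [shift_iterate_apply]
      have := hw (Fin.natAdd m i)
      simpa [Nat.add_comm] using this
    exact add_le_add h1 h2
  · rw [zterm, if_neg hU]
    exact mul_nonneg (zterm_nonneg _ _ _) (zterm_nonneg _ _ _)

lemma zsum_submul {X : Set (ℕ → A)} (hinv : shiftMap '' X ⊆ X) (m n : ℕ) :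
    zsum X φ (m + n) ≤ zsum X φ m * zsum X φ n := by
  have key : zsum X φ (m + n) ≤
      ∑ w : Fin (m + n) → A,
        zterm X φ m (fun i => w (Fin.castAdd n i)) * zterm X φ n (fun i => w (Fin.natAdd m i)) :=
    Finset.sum_le_sum fun w _ => zterm_submul hM hinv m n w
  refine key.trans (le_of_eq ?_)
  rw [zsum, zsum, Finset.sum_mul_sum]
  set e : ((Fin m → A) × (Fin n → A)) ≃ (Fin (m + n) → A) :=
    (Equiv.sumArrowEquivProdArrow (Fin m) (Fin n) A).symm.trans
      (Equiv.arrowCongr finSumFinEquiv (Equiv.refl A)) with he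
  have h1 : ∀ (p : (Fin m → A) × (Fin n → A)) (i : Fin m), e p (Fin.castAdd n i) = p.1 i := by
    intro p i
    simp [he, Equiv.sumArrowEquivProdArrow, Equiv.arrowCongr]
  have h2 : ∀ (p : (Fin m → A) × (Fin n → A)) (i : Fin n), e p (Fin.natAdd m i) = p.2 i := by
    intro p i
    simp [he, Equiv.sumArrowEquivProdArrow, Equiv.arrowCongr]
  calc (∑ w : Fin (m + n) → A,
        zterm X φ m (fun i => w (Fin.castAdd n i)) * zterm X φ n (fun i => w (Fin.natAdd m i)))
      = ∑ p : (Fin m → A) × (Fin n → A),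
        zterm X φ m (fun i => e p (Fin.castAdd n i)) * zterm X φ n (fun i => e p (Fin.natAdd m i)) :=
        (Equiv.sum_comp e _).symm
    _ = ∑ p : (Fin m → A) × (Fin n → A), zterm X φ m p.1 * zterm X φ n p.2 := by
        refine Finset.sum_congr rfl fun p _ => ?_
        congr 1
        · congr 1; funext i; exact h1 p i
        · congr 1; funext i; exact h2 p i
    _ = ∑ i : Fin m → A, ∑ j : Fin n → A, zterm X φ m i * zterm X φ n j :=
        Fintype.sum_prod_type _

lemma subadd {X : Set (ℕ → A)} (hX : X.Nonempty) (hinv : shiftMap '' X ⊆ X) :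
    Subadditive (fun n => Real.log (zsum X φ n)) := by
  intro m n
  calc Real.log (zsum X φ (m + n)) ≤ Real.log (zsum X φ m * zsum X φ n) :=
        Real.log_le_log (zsum_pos hM hX (m + n)) (zsum_submul hM hinv m n)
    _ = Real.log (zsum X φ m) + Real.log (zsum X φ n) :=
        Real.log_mul (zsum_pos hM hX m).ne' (zsum_pos hM hX n).ne'

lemma M_nonneg {X : Set (ℕ → A)} (hX : X.Nonempty) : 0 ≤ M :=
  le_trans (abs_nonneg _) (hM hX.choose)

lemma neg_le_logz {X : Set (ℕ → A)} (hX : X.Nonempty) (n : ℕ) :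
    -(n * M) ≤ Real.log (zsum X φ n) := by
  have := Real.log_le_log (Real.exp_pos _) (exp_le_zsum hM hX n)
  rwa [Real.log_exp] at this

lemma bddBelow_logz_div {X : Set (ℕ → A)} (hX : X.Nonempty) :
    BddBelow (Set.range fun n : ℕ => Real.log (zsum X φ n) / n) := by
  refine ⟨-M, ?_⟩
  rintro _ ⟨n, rfl⟩
  rcases Nat.eq_zero_or_pos n with rfl | hn
  · simp [neg_nonpos.2 (M_nonneg hM hX)]
  · have hn' : (0 : ℝ) < n := by exact_mod_cast hn
    rw [le_div_iff₀ hn']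
    calc -M * n = -(n * M) := by ring
      _ ≤ Real.log (zsum X φ n) := neg_le_logz hM hX n

lemma tendsto_pressure {X : Set (ℕ → A)} (hX : X.Nonempty) (hinv : shiftMap '' X ⊆ X) :
    Tendsto (fun n : ℕ => Real.log (zsum X φ n) / n) atTop (𝓝 (pressure X φ)) := by
  have hs := subadd hM hX hinv
  have ht := hs.tendsto_lim (bddBelow_logz_div hM hX)
  have hp : pressure X φ = hs.lim := by rw [pressure_eq]; exact ht.limsup_eq
  rw [hp]; exact ht

lemma pressure_le_div {X : Set (ℕ → A)} (hX : X.Nonempty) (hinv : shiftMap '' X ⊆ X)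
    {n : ℕ} (hn : n ≠ 0) : pressure X φ ≤ Real.log (zsum X φ n) / n := by
  have hs := subadd hM hX hinv
  have ht := hs.tendsto_lim (bddBelow_logz_div hM hX)
  have hp : pressure X φ = hs.lim := by rw [pressure_eq]; exact ht.limsup_eq
  rw [hp]; exact hs.lim_le_div (bddBelow_logz_div hM hX) hn

lemma exists_div_lt {X : Set (ℕ → A)} (hX : X.Nonempty) (hinv : shiftMap '' X ⊆ X)
    {ε : ℝ} (hε : 0 < ε) :
    ∃ n : ℕ, n ≠ 0 ∧ Real.log (zsum X φ n) / n < pressure X φ + ε := by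
  have hs := subadd hM hX hinv
  have ht := hs.tendsto_lim (bddBelow_logz_div hM hX)
  have hp : pressure X φ = hs.lim := by rw [pressure_eq]; exact ht.limsup_eq
  have hlt : hs.lim < pressure X φ + ε := by rw [hp] at *; linarith
  rw [Subadditive.lim] at hlt
  obtain ⟨b, ⟨n, hn, rfl⟩, hb⟩ := exists_lt_of_csInf_lt
    (Set.Nonempty.image _ ⟨1, Set.mem_Ici.2 le_rfl⟩) hlt
  exact ⟨n, Nat.one_le_iff_ne_zero.1 (Set.mem_Ici.1 hn), hb⟩

lemma pressure_mono {X Y : Set (ℕ → A)} (hX : X.Nonempty) (hXY : X ⊆ Y)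
    (hinvX : shiftMap '' X ⊆ X) (hinvY : shiftMap '' Y ⊆ Y) :
    pressure X φ ≤ pressure Y φ := by
  have hY : Y.Nonempty := hX.mono hXY
  refine le_of_tendsto_of_tendsto' (tendsto_pressure hM hX hinvX)
    (tendsto_pressure hM hY hinvY) fun n => ?_
  rcases Nat.eq_zero_or_pos n with rfl | hn
  · simp
  · have hn' : (0 : ℝ) ≤ n := by positivity
    exact div_le_div_of_nonneg_right (Real.log_le_log (zsum_pos hM hX n) (zsum_mono hM hXY n)) hn'

set_option maxHeartbeats 1000000 in
lemma pressure_union_le {X Y : Set (ℕ → A)} (hX : X.Nonempty) (hY : Y.Nonempty)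
    (hinvX : shiftMap '' X ⊆ X) (hinvY : shiftMap '' Y ⊆ Y) :
    pressure (X ∪ Y) φ ≤ max (pressure X φ) (pressure Y φ) := by
  have hinvU : shiftMap '' (X ∪ Y) ⊆ X ∪ Y := by
    rw [Set.image_union]
    exact Set.union_subset_union hinvX hinvY
  have hUne : (X ∪ Y).Nonempty := hX.mono Set.subset_union_left
  have htU := tendsto_pressure hM hUne hinvU
  have htX := tendsto_pressure hM hX hinvX
  have htY := tendsto_pressure hM hY hinvY
  have htg : Tendsto
      (fun n : ℕ => Real.log 2 / n +
        max (Real.log (zsum X φ n) / n) (Real.log (zsum Y φ n) / n)) atTop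
      (𝓝 (0 + max (pressure X φ) (pressure Y φ))) :=
    (tendsto_const_nhds.div_atTop tendsto_natCast_atTop_atTop).add (htX.max htY)
  rw [zero_add] at htg
  refine le_of_tendsto_of_tendsto' htU htg fun n => ?_
  rcases Nat.eq_zero_or_pos n with rfl | hn
  · simp
  · have hn' : (0 : ℝ) < n := by exact_mod_cast hn
    have key : Real.log (zsum (X ∪ Y) φ n) ≤
        Real.log 2 + max (Real.log (zsum X φ n)) (Real.log (zsum Y φ n)) := by
      have hposX := zsum_pos hM hX n
      have hposY := zsum_pos hM hY n
      have h2 : zsum (X ∪ Y) φ n ≤ 2 * max (zsum X φ n) (zsum Y φ n) := by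
        calc zsum (X ∪ Y) φ n ≤ zsum X φ n + zsum Y φ n := zsum_union_le hM X Y n
          _ ≤ 2 * max (zsum X φ n) (zsum Y φ n) := by
              rw [two_mul]
              exact add_le_add (le_max_left _ _) (le_max_right _ _)
      have hUpos : 0 < zsum (X ∪ Y) φ n := zsum_pos hM (hX.mono Set.subset_union_left) n
      calc Real.log (zsum (X ∪ Y) φ n) ≤ Real.log (2 * max (zsum X φ n) (zsum Y φ n)) :=
            Real.log_le_log hUpos h2
        _ = Real.log 2 + Real.log (max (zsum X φ n) (zsum Y φ n)) :=
            Real.log_mul two_ne_zero (by positivity)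
        _ ≤ Real.log 2 + max (Real.log (zsum X φ n)) (Real.log (zsum Y φ n)) := by
            rcases le_total (zsum X φ n) (zsum Y φ n) with h | h
            · rw [max_eq_right h]; exact add_le_add le_rfl (le_max_right _ _)
            · rw [max_eq_left h]; exact add_le_add le_rfl (le_max_left _ _)
    rw [max_div_div_right hn'.le, ← add_div]
    exact div_le_div_of_nonneg_right key hn'.le

end withM

section Topo

variable [TopologicalSpace A] [DiscreteTopology A]

omit [Fintype A] in
lemma continuous_shiftMap : Continuous (shiftMap : (ℕ → A) → (ℕ → A)) :=
  continuous_pi fun i => continuous_apply (i + 1)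

omit [Fintype A] in
lemma continuous_birk {φ : (ℕ → A) → ℝ} (hφ : Continuous φ) (n : ℕ) :
    Continuous (birk φ n) :=
  continuous_finset_sum _ fun k _ => hφ.comp (continuous_shiftMap.iterate k)

omit [Fintype A] in
lemma isClosed_cylSet {X : Set (ℕ → A)} (hX : IsClosed X) (n : ℕ) (w : Fin n → A) :
    IsClosed (cylSet X n w) := by
  have : cylSet X n w = X ∩ ⋂ i : Fin n, (fun x : ℕ → A => x (i : ℕ)) ⁻¹' {w i} := by
    ext x; simp [cylSet, Set.mem_iInter]
  rw [this]
  exact hX.inter (isClosed_iInter fun i =>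
    IsClosed.preimage (continuous_apply _) (isClosed_discrete _))

include hM in
lemma exists_zsum_le (hφ : Continuous φ) {Xm : ℕ → Set (ℕ → A)}
    (hcl : ∀ m, IsClosed (Xm m)) (hdec : Antitone Xm) (n : ℕ) {ε : ℝ} (hε : 0 < ε) :
    ∃ m, zsum (Xm m) φ n ≤ Real.exp ε * zsum (⋂ k, Xm k) φ n := by
  set I := ⋂ k, Xm k with hI
  have hIsub : ∀ m, I ⊆ Xm m := fun m => Set.iInter_subset _ m
  have hCinter : ∀ w : Fin n → A, (⋂ m, cylSet (Xm m) n w) = cylSet I n w := by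
    intro w
    ext x
    simp only [Set.mem_iInter, cylSet, Set.mem_setOf_eq, Set.mem_sep_iff, hI]
    constructor
    · intro h
      exact ⟨fun m => (h m).1, (h 0).2⟩
    · rintro ⟨hx, hw⟩ m
      exact ⟨hx m, hw⟩
  have claim : ∀ w : Fin n → A,
      ∃ m, zterm (Xm m) φ n w ≤ Real.exp ε * zterm I φ n w := by
    intro w
    by_cases hadm : adm I n w
    · obtain ⟨x₀, hx₀, hw₀⟩ := hadm
      set c := sSup (birk φ n '' cylSet I n w) with hc
      set D : ℕ → Set (ℕ → A) :=
        fun m => cylSet (Xm m) n w ∩ {x | c + ε ≤ birk φ n x} with hD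
      have hDcl : ∀ m, IsClosed (D m) := fun m =>
        (isClosed_cylSet (hcl m) n w).inter (isClosed_le continuous_const (continuous_birk hφ n))
      have hDdec : ∀ m, D (m + 1) ⊆ D m := fun m =>
        Set.inter_subset_inter_left _ fun x hx =>
          ⟨hdec (Nat.le_succ m) hx.1, hx.2⟩
      by_cases hall : ∀ m, (D m).Nonempty
      · exfalso
        obtain ⟨x, hx⟩ := IsCompact.nonempty_iInter_of_sequence_nonempty_isCompact_isClosed
          D hDdec hall ((hDcl 0).isCompact) hDcl
        have hx1 : x ∈ cylSet I n w := by
          rw [← hCinter w]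
          exact Set.mem_iInter.2 fun m => (Set.mem_iInter.1 hx m).1
        have hx2 : c + ε ≤ birk φ n x := (Set.mem_iInter.1 hx 0).2
        have : birk φ n x ≤ c := le_csSup (bddAbove_birk_image hM I n w) ⟨x, hx1, rfl⟩
        linarith
      · push_neg at hall
        obtain ⟨m, hm0⟩ := hall
        have hm : D m = ∅ := by
          simpa [Set.not_nonempty_iff_eq_empty] using hm0
        refine ⟨m, ?_⟩
        have hadmm : adm (Xm m) n w := ⟨x₀, hIsub m hx₀, hw₀⟩
        have hlt : ∀ x ∈ cylSet (Xm m) n w, birk φ n x ≤ c + ε := by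
          intro x hx
          by_contra hcon
          have : x ∈ D m := ⟨hx, le_of_lt (lt_of_not_ge hcon)⟩
          rw [hm] at this
          exact this
        rw [zterm, if_pos hadmm, zterm, if_pos ⟨x₀, hx₀, hw₀⟩, ← Real.exp_add]
        apply Real.exp_le_exp.2
        have hne : (birk φ n '' cylSet (Xm m) n w).Nonempty :=
          ⟨birk φ n x₀, x₀, ⟨hIsub m hx₀, hw₀⟩, rfl⟩
        have : sSup (birk φ n '' cylSet (Xm m) n w) ≤ c + ε := by
          apply csSup_le hne
          rintro _ ⟨x, hx, rfl⟩
          exact hlt x hx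
        rw [← hc]; linarith
    · have hIempty : cylSet I n w = ∅ := by
        rw [Set.eq_empty_iff_forall_notMem]
        rintro x ⟨hx, hw⟩
        exact hadm ⟨x, hx, hw⟩
      have : ¬ ∀ m, (cylSet (Xm m) n w).Nonempty := by
        intro hall
        have := IsCompact.nonempty_iInter_of_sequence_nonempty_isCompact_isClosed
          (fun m => cylSet (Xm m) n w)
          (fun m => fun x hx => ⟨hdec (Nat.le_succ m) hx.1, hx.2⟩) hall
          ((isClosed_cylSet (hcl 0) n w).isCompact) (fun m => isClosed_cylSet (hcl m) n w)
        rw [hCinter w, hIempty] at this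
        exact Set.not_nonempty_empty this
      push_neg at this
      obtain ⟨m, hm0⟩ := this
      have hm : cylSet (Xm m) n w = ∅ := by
        simpa [Set.not_nonempty_iff_eq_empty] using hm0
      refine ⟨m, ?_⟩
      have : ¬ adm (Xm m) n w := by
        rintro ⟨x, hx, hw⟩
        have : x ∈ cylSet (Xm m) n w := ⟨hx, hw⟩
        rw [hm] at this
        exact this
      rw [zterm, if_neg this]
      exact mul_nonneg (Real.exp_pos _).le (zterm_nonneg _ _ _)
  choose f hf using claim
  refine ⟨Finset.univ.sup f, ?_⟩
  have hle : ∀ w : Fin n → A, zterm (Xm (Finset.univ.sup f)) φ n w ≤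
      Real.exp ε * zterm I φ n w := fun w =>
    (zterm_mono hM (hdec (Finset.le_sup (Finset.mem_univ w))) n w).trans (hf w)
  calc zsum (Xm (Finset.univ.sup f)) φ n ≤ ∑ w : Fin n → A, Real.exp ε * zterm I φ n w :=
        Finset.sum_le_sum fun w _ => hle w
    _ = Real.exp ε * zsum I φ n := by rw [zsum, Finset.mul_sum]

end Topo

end Aux

section Lip

variable {A : Type*}

lemma sdist_nonneg (ω ω' : ℕ → A) : 0 ≤ sdist ω ω' := by
  unfold sdist; split
  · rfl
  · positivity

lemma sdist_le_one (ω ω' : ℕ → A) : sdist ω ω' ≤ 1 := by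
  unfold sdist; split
  · norm_num
  · calc (2 : ℝ) ^ (-(firstDiff ω ω' : ℤ)) ≤ (2 : ℝ) ^ (0 : ℤ) :=
        zpow_le_zpow_right₀ one_le_two (by simp)
      _ = 1 := by norm_num

lemma sdist_le_of_agree {ω ω' : ℕ → A} {k : ℕ} (h : ∀ i < k, ω i = ω' i) :
    sdist ω ω' ≤ (2 : ℝ) ^ (-(k : ℤ)) := by
  unfold sdist; split
  · positivity
  · rename_i hne
    have hset : {j | ω j ≠ ω' j}.Nonempty := by
      rw [Set.nonempty_def]
      by_contra hcon
      push_neg at hcon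
      exact hne (funext fun j => by_contra fun hj => (hcon j) hj)
    have hmem : firstDiff ω ω' ∈ {j | ω j ≠ ω' j} := Nat.sInf_mem hset
    have hk : k ≤ firstDiff ω ω' := by
      by_contra hcon
      push_neg at hcon
      exact hmem (h _ hcon)
    exact zpow_le_zpow_right₀ one_le_two (by exact_mod_cast neg_le_neg (by exact_mod_cast hk))

variable {φ : (ℕ → A) → ℝ} {Cφ : ℝ} (hLip : ∀ ω ω' : ℕ → A, |φ ω - φ ω'| ≤ Cφ * sdist ω ω')

include hLip

lemma lip_abs (ω ω' : ℕ → A) : |φ ω - φ ω'| ≤ |Cφ| * sdist ω ω' :=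
  (hLip ω ω').trans (mul_le_mul_of_nonneg_right (le_abs_self _) (sdist_nonneg ω ω'))

lemma bound_of_lip (ω₀ : ℕ → A) (ω : ℕ → A) : |φ ω| ≤ |φ ω₀| + |Cφ| := by
  have h1 : |φ ω - φ ω₀| ≤ |Cφ| * sdist ω ω₀ := lip_abs hLip ω ω₀
  have h2 : |Cφ| * sdist ω ω₀ ≤ |Cφ| * 1 :=
    mul_le_mul_of_nonneg_left (sdist_le_one _ _) (abs_nonneg _)
  calc |φ ω| = |φ ω - φ ω₀ + φ ω₀| := by ring_nf
    _ ≤ |φ ω - φ ω₀| + |φ ω₀| := abs_add_le _ _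
    _ ≤ |Cφ| * 1 + |φ ω₀| := add_le_add (h1.trans h2) le_rfl
    _ = |φ ω₀| + |Cφ| := by ring

lemma continuous_of_lip [TopologicalSpace A] [DiscreteTopology A] : Continuous φ := by
  rw [continuous_iff_continuousAt]
  intro ω
  rw [ContinuousAt, Metric.tendsto_nhds]
  intro ε hε
  have hhalf : (0 : ℝ) < ε / (|Cφ| + 1) := by positivity
  obtain ⟨k, hk⟩ := exists_pow_lt_of_lt_one hhalf (by norm_num : (1 : ℝ) / 2 < 1)
  have hev : ∀ᶠ ω' in 𝓝 ω, ∀ i ∈ Finset.range k, ω' i = ω i := by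
    rw [eventually_all_finset]
    intro i _
    have hopen : IsOpen ((fun x : ℕ → A => x i) ⁻¹' {ω i}) :=
      (continuous_apply i).isOpen_preimage _ (isOpen_discrete _)
    exact Filter.eventually_of_mem (hopen.mem_nhds rfl) fun x hx => hx
  refine hev.mono fun ω' hω' => ?_
  rw [Real.dist_eq]
  have hagree : ∀ i < k, ω' i = ω i := fun i hi => hω' i (Finset.mem_range.2 hi)
  have hsd : sdist ω' ω ≤ (2 : ℝ) ^ (-(k : ℤ)) := sdist_le_of_agree hagree
  have h2k : (2 : ℝ) ^ (-(k : ℤ)) = (1 / 2 : ℝ) ^ k := by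
    rw [zpow_neg, zpow_natCast, one_div, inv_pow]
  calc |φ ω' - φ ω| ≤ |Cφ| * sdist ω' ω := lip_abs hLip ω' ω
    _ ≤ |Cφ| * (1 / 2 : ℝ) ^ k := by
        rw [← h2k]
        exact mul_le_mul_of_nonneg_left hsd (abs_nonneg _)
    _ ≤ (|Cφ| + 1) * (1 / 2 : ℝ) ^ k := by
        have : (0:ℝ) ≤ (1 / 2 : ℝ) ^ k := by positivity
        nlinarith
    _ < (|Cφ| + 1) * (ε / (|Cφ| + 1)) := by
        apply mul_lt_mul_of_pos_left hk
        positivity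
    _ = ε := by field_simp

end Lip



/-- if `Σ_m` is a decreasing sequence of subshifts with intersection
`Σ_A ⊔ Σ_D`, and the pressures of `(Σ_A, φ)` and `(Σ_D, φ)` both equal `P`, then
the pressures `P_m = P(Σ_m, φ)` decrease to `P`. -/
theorem pressure_decreases_to_P
    {A : Type*} [Fintype A] [TopologicalSpace A] [DiscreteTopology A]
    (Xm : ℕ → Set (ℕ → A)) (XA XD : Set (ℕ → A))
    (hXmclosed : ∀ m, IsClosed (Xm m))
    (hXminv : ∀ m, shiftMap '' Xm m ⊆ Xm m)
    (hXmne : ∀ m, (Xm m).Nonempty)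
    (hdecr : ∀ m, Xm (m + 1) ⊆ Xm m)
    (hXAclosed : IsClosed XA) (hXDclosed : IsClosed XD)
    (hXAinv : shiftMap '' XA ⊆ XA) (hXDinv : shiftMap '' XD ⊆ XD)
    (hXAne : XA.Nonempty) (hXDne : XD.Nonempty)
    (hdisj : Disjoint XA XD)
    (hinter : (⋂ m, Xm m) = XA ∪ XD)
    (φ : (ℕ → A) → ℝ) (Cφ : ℝ)
    (hLip : ∀ ω ω' : ℕ → A, |φ ω - φ ω'| ≤ Cφ * sdist ω ω')
    (P : ℝ) (hPA : pressure XA φ = P) (hPD : pressure XD φ = P) :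
    Antitone (fun m => pressure (Xm m) φ) ∧
    Tendsto (fun m => pressure (Xm m) φ) atTop (nhds P) := by
  obtain ⟨ω₀, hω₀⟩ := hXAne
  have hM : ∀ ω, |φ ω| ≤ |φ ω₀| + |Cφ| := bound_of_lip hLip ω₀
  have hφc : Continuous φ := continuous_of_lip hLip
  have hXmAnti : Antitone Xm := antitone_nat_of_succ_le hdecr
  have hAnt : Antitone (fun m => pressure (Xm m) φ) := fun m m' h =>
    pressure_mono hM (hXmne m') (hXmAnti h) (hXminv m') (hXminv m)
  set I : Set (ℕ → A) := XA ∪ XD with hIdef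
  have hIinv : shiftMap '' I ⊆ I := by
    rw [hIdef, Set.image_union]
    exact Set.union_subset_union hXAinv hXDinv
  have hIne : I.Nonempty := ⟨ω₀, Or.inl hω₀⟩
  have hXAI : XA ⊆ I := Set.subset_union_left
  have hXAsub : ∀ m, XA ⊆ Xm m := fun m x hx => by
    have : x ∈ ⋂ k, Xm k := hinter ▸ (Or.inl hx : x ∈ XA ∪ XD)
    exact Set.mem_iInter.1 this m
  have hlow : ∀ m, P ≤ pressure (Xm m) φ := fun m => by
    rw [← hPA]
    exact pressure_mono hM ⟨ω₀, hω₀⟩ (hXAsub m) hXAinv (hXminv m)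
  have hPI : pressure I φ ≤ P := by
    have := pressure_union_le hM ⟨ω₀, hω₀⟩ hXDne hXAinv hXDinv
    rwa [hPA, hPD, max_self] at this
  have hupper : ∀ ε : ℝ, 0 < ε → ∃ m0 : ℕ, pressure (Xm m0) φ ≤ P + ε := by
    intro ε hε
    have hε4 : (0 : ℝ) < ε / 4 := by linarith
    obtain ⟨n, hn0, hlt⟩ := exists_div_lt hM hIne hIinv hε4
    have hnpos : (0 : ℝ) < n := by
      exact_mod_cast Nat.pos_of_ne_zero hn0
    have hnε : (0 : ℝ) < n * (ε / 4) := by positivity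
    obtain ⟨m, hm⟩ := exists_zsum_le hM hφc hXmclosed hXmAnti n hnε
    rw [hinter] at hm
    have hlog : Real.log (zsum (Xm m) φ n) ≤ n * (ε / 4) + Real.log (zsum I φ n) := by
      calc Real.log (zsum (Xm m) φ n)
          ≤ Real.log (Real.exp (n * (ε / 4)) * zsum I φ n) :=
            Real.log_le_log (zsum_pos hM (hXmne m) n) hm
        _ = n * (ε / 4) + Real.log (zsum I φ n) := by
            rw [Real.log_mul (Real.exp_pos _).ne' (zsum_pos hM hIne n).ne', Real.log_exp]
    have hdiv : Real.log (zsum (Xm m) φ n) / n ≤ ε / 4 + Real.log (zsum I φ n) / n := by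
      have h := div_le_div_of_nonneg_right hlog hnpos.le
      have heq : ((n : ℝ) * (ε / 4) + Real.log (zsum I φ n)) / n =
          ε / 4 + Real.log (zsum I φ n) / n := by
        field_simp
      rwa [heq] at h
    refine ⟨m, ?_⟩
    calc pressure (Xm m) φ ≤ Real.log (zsum (Xm m) φ n) / n :=
          pressure_le_div hM (hXmne m) (hXminv m) hn0
      _ ≤ ε / 4 + Real.log (zsum I φ n) / n := hdiv
      _ ≤ ε / 4 + (pressure I φ + ε / 4) := by linarith
      _ ≤ P + ε := by linarith
  refine ⟨hAnt, ?_⟩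
  rw [Metric.tendsto_atTop]
  intro ε hε
  obtain ⟨m0, hm0⟩ := hupper (ε / 2) (by linarith)
  refine ⟨m0, fun m hm => ?_⟩
  have h1 : P ≤ pressure (Xm m) φ := hlow m
  have h2 : pressure (Xm m) φ ≤ P + ε / 2 := (hAnt hm).trans hm0
  rw [Real.dist_eq, abs_of_nonneg (by linarith)]
  linarith

end Stmt11
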